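/- arXiv:1609.03338 — 6 statements merged into one kernel-verified Lean document; each statement's English description precedes it below -/
import Mathlib

section
/- Commutativity of public inspections is semantically valid: for every PIL model M, state s, constants c, d, and formula φ, M,s ⊨ [c][d]φ iff M,s ⊨ [d][c]φ. -/
structure PILModel (Cst : Type) where
  S : Type
  D : Type
  S_ne : Nonempty S
  D_ne : Nonempty D
  V : S → Cst → D

inductive Form (Cst : Type) : Type where
  | top  : Form Cst
  | neg  : Form Cst → Form Cst
  | conj : Form Cst → Form Cst → Form Cst
  | Kv   : Cst → Form Cst
  | box  : Cst → Form Cst → Form Cst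

def PILModel.restrict {Cst} (M : PILModel Cst) (s : M.S) (c : Cst) : PILModel Cst where
  S := { t : M.S // M.V s c = M.V t c }
  D := M.D
  S_ne := ⟨⟨s, rfl⟩⟩
  D_ne := M.D_ne
  V := fun t d => M.V t.1 d

def Sat {Cst} : (M : PILModel Cst) → M.S → Form Cst → Prop
  | _, _, .top => True
  | M, s, .neg φ => ¬ Sat M s φ
  | M, s, .conj φ ψ => Sat M s φ ∧ Sat M s ψ
  | M, s, .Kv c => ∀ t : M.S, M.V s c = M.V t c
  | M, s, .box c φ => Sat (M.restrict s c) ⟨s, rfl⟩ φ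

/-- `e` preserves agreement of values. -/
def Preserves {Cst} (M N : PILModel Cst) (e : M.S ≃ N.S) : Prop :=
  ∀ t u c, M.V t c = M.V u c ↔ N.V (e t) c = N.V (e u) c

lemma sat_equiv {Cst} (φ : Form Cst) :
    ∀ (M N : PILModel Cst) (e : M.S ≃ N.S), Preserves M N e →
      ∀ t : M.S, Sat M t φ ↔ Sat N (e t) φ := by
  induction φ with
  | top => intro M N e h t; simp [Sat]
  | neg ψ ih => intro M N e h t; simpa [Sat] using not_congr (ih M N e h t)
  | conj ψ χ ih1 ih2 =>
      intro M N e h t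
      simpa [Sat] using and_congr (ih1 M N e h t) (ih2 M N e h t)
  | Kv c =>
      intro M N e h t
      simp only [Sat]
      constructor
      · intro H u
        have := (h t (e.symm u) c).mp (H (e.symm u))
        simpa using this
      · intro H u
        exact (h t u c).mpr (H (e u))
  | box c ψ ih =>
      intro M N e h t
      simp only [Sat]
      refine ih (M.restrict t c) (N.restrict (e t) c)
        ⟨fun u => ⟨e u.1, (h t u.1 c).mp u.2⟩,
         fun u => ⟨e.symm u.1, by
            have := (h t (e.symm u.1) c).mpr (by simpa using u.2); exact this⟩,
         fun u => Subtype.ext (by simp),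
         fun u => Subtype.ext (by simp)⟩
        (fun u v d => h u.1 v.1 d) ⟨t, rfl⟩

/-- Commutativity of public inspections: [c][d]φ ↔ [d][c]φ. -/
theorem comm_valid {Cst : Type} (M : PILModel Cst) (s : M.S) (c d : Cst) (φ : Form Cst) :
    Sat M s (Form.box c (Form.box d φ)) ↔ Sat M s (Form.box d (Form.box c φ)) := by
  show Sat ((M.restrict s c).restrict ⟨s, rfl⟩ d) ⟨⟨s, rfl⟩, rfl⟩ φ ↔
       Sat ((M.restrict s d).restrict ⟨s, rfl⟩ c) ⟨⟨s, rfl⟩, rfl⟩ φ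
  exact sat_equiv φ ((M.restrict s c).restrict ⟨s, rfl⟩ d) ((M.restrict s d).restrict ⟨s, rfl⟩ c)
    ⟨fun u => ⟨⟨u.1.1, u.2⟩, u.1.2⟩, fun u => ⟨⟨u.1.1, u.2⟩, u.1.2⟩,
     fun u => rfl, fun u => rfl⟩
    (fun t u e => Iff.rfl) ⟨⟨s, rfl⟩, rfl⟩
end

section
/- The scheme IR' is derivable semantically: in any PIL model M and state s, if M,s ⊨ Kv(c) and M,s ⊨ φ, then M,s ⊨ [c]φ. -/
/-! When `Kv c` holds at `s`, every state agrees with `s` on `c`, so the announcement `[c]`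
deletes nothing: `M|_c^s` is isomorphic to `M`, and truth is invariant under isomorphism. -/

namespace PILModel

variable {Cst : Type}

structure Iso (M N : PILModel Cst) where
  state : M.S ≃ N.S
  value : M.D ≃ N.D
  value_V : ∀ s c, value (M.V s c) = N.V (state s) c

namespace Iso

variable {M N : PILModel Cst}

theorem V_eq_V_iff (e : M.Iso N) (s t : M.S) (c : Cst) :
    M.V s c = M.V t c ↔ N.V (e.state s) c = N.V (e.state t) c := by
  rw [← e.value_V, ← e.value_V, e.value.apply_eq_iff_eq]

def restrict (e : M.Iso N) (s : M.S) (c : Cst) :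
    (M.restrict s c).Iso (N.restrict (e.state s) c) where
  state := e.state.subtypeEquiv fun t => e.V_eq_V_iff s t c
  value := e.value
  value_V t := e.value_V t.1

theorem sat_iff (φ : Form Cst) :
    ∀ {M N : PILModel Cst} (e : M.Iso N) (s : M.S), Sat M s φ ↔ Sat N (e.state s) φ := by
  induction φ with
  | top => intro _ _ _ _; rfl
  | neg φ ih => intro _ _ e s; exact not_congr (ih e s)
  | conj φ ψ ihφ ihψ => intro _ _ e s; exact and_congr (ihφ e s) (ihψ e s)
  | Kv c =>
    intro _ N e s
    simp only [Sat, e.V_eq_V_iff s _ c]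
    exact e.state.forall_congr_right (q := fun t => N.V (e.state s) c = N.V t c)
  | box c φ ih => intro _ _ e s; exact ih (e.restrict s c) ⟨s, rfl⟩

end Iso

def restrictIsoOfSatKv {M : PILModel Cst} {s : M.S} {c : Cst} (h : Sat M s (.Kv c)) :
    (M.restrict s c).Iso M where
  state := Equiv.subtypeUnivEquiv h
  value := Equiv.refl M.D
  value_V _ _ := rfl

end PILModel

/-- IR': if Kv(c) and φ hold at s, then [c]φ holds at s. -/
theorem ir'_valid {Cst : Type} (M : PILModel Cst) (s : M.S) (c : Cst) (φ : Form Cst)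
    (hKv : Sat M s (Form.Kv c)) (hφ : Sat M s φ) : Sat M s (Form.box c φ) :=
  ((PILModel.restrictIsoOfSatKv hKv).sat_iff φ ⟨s, rfl⟩).mpr hφ
end

section
/- For finite sets of constants C and D, the semantics of the defined dependency operator satisfies: M,s ⊨ Kv(C,D) iff for all t ∈ S, if V(s,c)=V(t,c) for all c ∈ C, then V(s,d)=V(t,d) for all d ∈ D. Here Kv(C,D) := [c_1]...[c_m](Kv(d_1) ∧ ... ∧ Kv(d_n)) for any enumerations of C and D, and the truth value is independent of the enumerations chosen. -/
/-- Iterated inspection [c_1]...[c_m]φ along a list. -/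
def boxList {Cst : Type} (l : List Cst) (φ : Form Cst) : Form Cst := l.foldr Form.box φ

/-- Conjunction Kv(d_1) ∧ ... ∧ Kv(d_n) along a list. -/
def kvConj {Cst : Type} (l : List Cst) : Form Cst :=
  l.foldr (fun d ψ => Form.conj (Form.Kv d) ψ) Form.top

theorem sat_kvConj {Cst : Type} (M : PILModel Cst) (s : M.S) (l : List Cst) :
    Sat M s (kvConj l) ↔ ∀ d ∈ l, ∀ t : M.S, M.V s d = M.V t d := by
  induction l with
  | nil => simp [kvConj, Sat]
  | cons d l ih => simp [kvConj, Sat, ← ih]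

theorem sat_boxList_kvConj {Cst : Type} (lC lD : List Cst) (M : PILModel Cst) (s : M.S) :
    Sat M s (boxList lC (kvConj lD)) ↔
      ∀ t : M.S, (∀ c ∈ lC, M.V s c = M.V t c) → ∀ d ∈ lD, M.V s d = M.V t d := by
  induction lC generalizing M s with
  | nil => simp [boxList, sat_kvConj, forall_comm (α := M.S)]
  | cons c l ih =>
    -- states of `M.restrict s c` are the states of `M` that agree with `s` on `c`
    change Sat (M.restrict s c) ⟨s, rfl⟩ (boxList l (kvConj lD)) ↔ _
    simp [ih, PILModel.restrict]

/-- Semantics of the defined dependency operator Kv(C,D), independent of enumerations. -/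
theorem kvDep_semantics {Cst : Type} [DecidableEq Cst] (M : PILModel Cst) (s : M.S)
    (C D : Finset Cst) (lC lD : List Cst) (hC : lC.toFinset = C) (hD : lD.toFinset = D) :
    Sat M s (boxList lC (kvConj lD)) ↔
      ∀ t : M.S, (∀ c ∈ C, M.V s c = M.V t c) → ∀ d ∈ D, M.V s d = M.V t d := by
  subst hC hD
  simpa using sat_boxList_kvConj lC lD M s
end

section
/- Truth lemma, forward direction for the canonical model: let G be a relation on subsets of a set of constants ℂ satisfying projectivity (B ⊆ A implies A → B), transitivity, and additivity (A → B and A → B' imply A → B ∪ B'). Define the model M whose states are the subsets s ⊆ ℂ closed under G (s is closed iff whenever A ⊆ s and A → B, then B ⊆ s), with domain {0,1} and valuation V(s,c) = 0 if c ∈ s, else 1. Then for all finite sets C, D ⊆ ℂ: if C → D in G, then M, ℂ ⊨ Kv(C,D), i.e., every closed state t containing C also contains D. -/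
/-- A set of constants s is closed under the dependency graph G. -/
def GClosed {Cst : Type} (G : Set Cst → Set Cst → Prop) (s : Set Cst) : Prop :=
  ∀ A B : Set Cst, A ⊆ s → G A B → B ⊆ s

open Classical in
/-- Canonical valuation: V(s,c) = 0 if c ∈ s, else 1. -/
noncomputable def canonV {Cst : Type} (s : Set Cst) (c : Cst) : Fin 2 :=
  if c ∈ s then 0 else 1

/-- Truth lemma, forward: if C → D in G then Kv(C,D) holds at the actual state ℂ (= Set.univ)
of the canonical model whose states are the G-closed subsets. -/
theorem truth_lemma_forward {Cst : Type} (G : Set Cst → Set Cst → Prop)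
    (proj : ∀ A B : Set Cst, B ⊆ A → G A B)
    (trans : ∀ A B E : Set Cst, G A B → G B E → G A E)
    (add : ∀ A B B' : Set Cst, G A B → G A B' → G A (B ∪ B'))
    (C D : Set Cst) (hC : C.Finite) (hD : D.Finite) (hG : G C D) :
    ∀ t : Set Cst, GClosed G t →
      (∀ c ∈ C, canonV (Set.univ : Set Cst) c = canonV t c) →
      ∀ d ∈ D, canonV (Set.univ : Set Cst) d = canonV t d := by
  intro t ht hCt d hd
  have hCsub : C ⊆ t := by
    intro c hc
    have := hCt c hc
    simp [canonV] at this ⊢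
    by_contra hct
    simp [hct] at this
  have hDsub : D ⊆ t := ht C D hCsub hG
  simp [canonV, hDsub hd]
end

section
/- Multi-agent dependency semantics: for finite sets C = {c_1,...,c_n}, D = {d_1,...,d_m} and agent i, the formula Kv_i(C,D) := [c_1]...[c_n](Kv_i(d_1) ∧ ... ∧ Kv_i(d_m)) satisfies: M,s ⊨ Kv_i(C,D) iff for all t ∈ S, if s ~_i t and V(s,c)=V(t,c) for all c ∈ C, then V(s,d)=V(t,d) for all d ∈ D. -/
structure MAModel (Cst I : Type) where
  S : Type
  D : Type
  S_ne : Nonempty S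
  D_ne : Nonempty D
  V : S → Cst → D
  R : I → S → S → Prop
  R_equiv : ∀ i, Equivalence (R i)

inductive MForm (Cst I : Type) : Type where
  | top  : MForm Cst I
  | neg  : MForm Cst I → MForm Cst I
  | conj : MForm Cst I → MForm Cst I → MForm Cst I
  | Kv   : I → Cst → MForm Cst I
  | box  : Cst → MForm Cst I → MForm Cst I

def MAModel.restrict {Cst I} (M : MAModel Cst I) (s : M.S) (c : Cst) : MAModel Cst I where
  S := { t : M.S // M.V s c = M.V t c }
  D := M.D
  S_ne := ⟨⟨s, rfl⟩⟩
  D_ne := M.D_ne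
  V := fun t d => M.V t.1 d
  R := fun i t u => M.R i t.1 u.1
  R_equiv := fun i => ⟨fun _ => (M.R_equiv i).refl _,
    fun h => (M.R_equiv i).symm h, fun h h' => (M.R_equiv i).trans h h'⟩

def MSat {Cst I} : (M : MAModel Cst I) → M.S → MForm Cst I → Prop
  | _, _, .top => True
  | M, s, .neg φ => ¬ MSat M s φ
  | M, s, .conj φ ψ => MSat M s φ ∧ MSat M s ψ
  | M, s, .Kv i c => ∀ t : M.S, M.R i s t → M.V s c = M.V t c
  | M, s, .box c φ => MSat (M.restrict s c) ⟨s, rfl⟩ φ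

def mBoxList {Cst I : Type} (l : List Cst) (φ : MForm Cst I) : MForm Cst I := l.foldr MForm.box φ

def mKvConj {Cst I : Type} (i : I) (l : List Cst) : MForm Cst I :=
  l.foldr (fun d ψ => MForm.conj (MForm.Kv i d) ψ) MForm.top

namespace MAModel

variable {Cst I : Type}

theorem mSat_mKvConj_iff (M : MAModel Cst I) (s : M.S) (i : I) (l : List Cst) :
    MSat M s (mKvConj i l) ↔ ∀ t, M.R i s t → ∀ d ∈ l, M.V s d = M.V t d := by
  induction l with
  | nil => simp [mKvConj, MSat]
  | cons d l ih =>
    change (MSat M s (.Kv i d) ∧ MSat M s (mKvConj i l)) ↔ _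
    simp only [ih, MSat, List.forall_mem_cons, imp_and, forall_and]

theorem mSat_mBoxList_mKvConj_iff (M : MAModel Cst I) (s : M.S) (i : I) (lC lD : List Cst) :
    MSat M s (mBoxList lC (mKvConj i lD)) ↔
      ∀ t, M.R i s t → (∀ c ∈ lC, M.V s c = M.V t c) → ∀ d ∈ lD, M.V s d = M.V t d := by
  induction lC generalizing M s with
  | nil => simp [mBoxList, mSat_mKvConj_iff]
  | cons c l ih =>
    change MSat (M.restrict s c) ⟨s, rfl⟩ (mBoxList l (mKvConj i lD)) ↔ _
    simp only [ih, restrict, Subtype.forall, List.forall_mem_cons, and_imp]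
    exact forall_congr' fun _ => Imp.swap

end MAModel

/-- Semantics of the multi-agent dependency operator Kv_i(C,D), for any enumerations. -/
theorem mKvDep_semantics {Cst I : Type} [DecidableEq Cst] (M : MAModel Cst I) (s : M.S) (i : I)
    (C D : Finset Cst) (lC lD : List Cst) (hC : lC.toFinset = C) (hD : lD.toFinset = D) :
    MSat M s (mBoxList lC (mKvConj i lD)) ↔
      ∀ t : M.S, M.R i s t → (∀ c ∈ C, M.V s c = M.V t c) →
        ∀ d ∈ D, M.V s d = M.V t d := by
  subst hC hD
  simpa only [List.mem_toFinset] using M.mSat_mBoxList_mKvConj_iff s i lC lD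
end

section
/- Multi-agent truth lemma, forward direction: let ℂ be a set of constants and, for each agent i, let G^i be a relation on P(ℂ) satisfying projectivity, transitivity and additivity. Define the canonical model with state set P(ℂ), domain {0,1}, valuation V(s,c)=0 iff c ∈ s, and s ~_i t iff (s is closed under G^i iff t is closed under G^i). Then for all finite C, D ⊆ ℂ: if C → D in G^i, then at the actual state ℂ the formula Kv_i(C,D) holds, i.e., every state t with ℂ ~_i t and C ⊆ t satisfies D ⊆ t. -/
/-- Multi-agent truth lemma, forward: in the canonical model (states = all subsets of ℂ,
s ~_i t iff s,t are both closed or both not closed under G^i), if C → D in G^i then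
Kv_i(C,D) holds at the actual state ℂ (= Set.univ). -/
theorem multi_truth_lemma_forward {Cst : Type} (G : Set Cst → Set Cst → Prop)
    (proj : ∀ A B : Set Cst, B ⊆ A → G A B)
    (trans : ∀ A B E : Set Cst, G A B → G B E → G A E)
    (add : ∀ A B B' : Set Cst, G A B → G A B' → G A (B ∪ B'))
    (C D : Set Cst) (hC : C.Finite) (hD : D.Finite) (hG : G C D) :
    ∀ t : Set Cst, (GClosed G (Set.univ : Set Cst) ↔ GClosed G t) →
      (∀ c ∈ C, canonV (Set.univ : Set Cst) c = canonV t c) →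
      ∀ d ∈ D, canonV (Set.univ : Set Cst) d = canonV t d := by
  intro t hsim hagree d hd
  have hclosed : GClosed G t := hsim.mp (fun A B _ _ => Set.subset_univ B)
  have hCt : C ⊆ t := by
    intro c hc
    have := hagree c hc
    simp only [canonV, Set.mem_univ, if_true] at this
    by_contra h
    simp [h] at this
  have hDt : D ⊆ t := hclosed C D hCt hG
  simp [canonV, hDt hd]
end
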